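/- arXiv:1408.5677 — 4 statements merged into one kernel-verified Lean document; each statement's English description precedes it below -/
import Mathlib

section
/- For all α ≥ 0, η_dagger(α) ≤ (1/2)·η_L(α), i.e., the minimized asymptotic variance coefficient is less than half of Leland's. -/
open Real

noncomputable def etaL (α : ℝ) : ℝ := (1/π) * α^2 + (2/π) * α + 1 - 2/π

noncomputable def etaDagger (x : ℝ) : ℝ :=
  if x ≤ -2 then (x + 2)^2 / 12
  else if x ≤ 1 then 0
  else if x < 2 then (4/3) * ((x + 2)^2 * (x - 1)) / (x^3 * (4 - x))
  else (x + 2)^2 / 12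

lemma etaL_eq_div (α : ℝ) : etaL α = ((α + 1) ^ 2 + π - 3) / π := by
  unfold etaL
  field_simp
  ring

lemma etaL_pos (α : ℝ) : 0 < etaL α := by
  rw [etaL_eq_div]
  exact div_pos (by nlinarith [sq_nonneg (α + 1), pi_gt_three]) pi_pos

lemma etaDagger_of_le_one {x : ℝ} (h₂ : -2 < x) (h₁ : x ≤ 1) : etaDagger x = 0 := by
  rw [etaDagger, if_neg h₂.not_ge, if_pos h₁]

lemma etaDagger_of_lt_two {x : ℝ} (h₁ : 1 < x) (h₂ : x < 2) :
    etaDagger x = (4/3) * ((x + 2)^2 * (x - 1)) / (x^3 * (4 - x)) := by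
  rw [etaDagger, if_neg (by linarith), if_neg h₁.not_ge, if_pos h₂]

lemma etaDagger_of_two_le {x : ℝ} (h : 2 ≤ x) : etaDagger x = (x + 2)^2 / 12 := by
  rw [etaDagger, if_neg (by linarith), if_neg (by linarith), if_neg h.not_gt]

lemma quartic_le_of_mem_Ioo {α : ℝ} (h₁ : 1 < α) (h₂ : α < 2) :
    3.15 * (3 * α^4 - 4 * α^3 + 24 * α^2 - 32) ≤ 3 * α^3 * (4 - α) * (α^2 + 2 * α - 2) := by
  have hI : 0 ≤ (α - 1) * (2 - α) := mul_nonneg (by linarith) (by linarith)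
  nlinarith [sq_nonneg (α - 1), sq_nonneg (α - 2), sq_nonneg ((α - 1) * (2 - α)),
    sq_nonneg (α * (α - 1)), sq_nonneg (α * (2 - α)),
    mul_nonneg hI (sq_nonneg α), mul_nonneg hI (sq_nonneg (α - 1)),
    mul_nonneg hI (sq_nonneg (α - 2))]

lemma etaDagger_le_half_etaL_of_mem_Ioo {α : ℝ} (h₁ : 1 < α) (h₂ : α < 2) :
    etaDagger α ≤ (1/2) * etaL α := by
  -- after clearing denominators the claim is `π * f ≤ R` with `f = 8 (α+2)² (α-1) - 3 α³ (4-α)`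
  set f := 3 * α^4 - 4 * α^3 + 24 * α^2 - 32
  set R := 3 * α^3 * (4 - α) * (α^2 + 2 * α - 2)
  have hR : 0 ≤ R := by
    have hα : 0 < α^3 := by positivity
    have hq : 0 < α^2 + 2 * α - 2 := by nlinarith
    have h4 : 0 < 4 - α := by linarith
    positivity
  -- `f` is negative near `1`, so the estimate `π < 3.15` is only applied where `f ≥ 0`
  have hπf : π * f ≤ R := by
    rcases le_total f 0 with hf | hf
    · nlinarith [pi_pos]
    · nlinarith [pi_lt_d2, quartic_le_of_mem_Ioo h₁ h₂]
  have hD : 0 < α^3 * (4 - α) := mul_pos (by positivity) (by linarith)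
  rw [etaDagger_of_lt_two h₁ h₂, etaL_eq_div, ← mul_div_assoc,
    div_le_div_iff₀ hD (by positivity)]
  linear_combination hπf / 6

lemma etaDagger_le_half_etaL_of_two_le {α : ℝ} (h : 2 ≤ α) : etaDagger α ≤ (1/2) * etaL α := by
  rw [etaDagger_of_two_le h, etaL_eq_div, ← mul_div_assoc, div_le_div_iff₀ (by norm_num) pi_pos]
  nlinarith [pi_lt_d2, mul_nonneg (sub_nonneg.2 h) (sub_nonneg.2 h)]

theorem stmt_4 : ∀ α : ℝ, 0 ≤ α → etaDagger α ≤ (1/2) * etaL α := by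
  intro α hα
  rcases le_or_gt α 1 with h₁ | h₁
  · rw [etaDagger_of_le_one (by linarith) h₁]
    exact mul_nonneg (by norm_num) (etaL_pos α).le
  rcases lt_or_ge α 2 with h₂ | h₂
  · exact etaDagger_le_half_etaL_of_mem_Ioo h₁ h₂
  · exact etaDagger_le_half_etaL_of_two_le h₂
end

section
/- Let c: [0,b] → [0,∞) be continuous, g(x) = exp(−2∫_0^x c(y)dy), a = 2∫_0^b g(x)dx, and let h: [0,b] → ℝ be C¹ with h(0) = 0, h(b) = −1 and satisfying −c(x)h(x) + (1/2)h'(x) = c(x) − 1/a for x ∈ (0,b). Then h(x) > −1 for all x ∈ (0,b), h'(x) ≥ −2/a, and c(x) = (h'(x) + 2/a)/(2(1+h(x))). -/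
/-!
Write `u = 1 + h`. The equation reads `u' = 2 c u - 2/a`, and `g' = -2 c g`, so `g` is an integrating
factor: `(u g)' = -(2/a) g`. Since `u(0) g(0) = 1`, this gives `(1 + h x) g x = 1 - (2/a) ∫₀ˣ g`, which is
positive for `x < b` because `∫₀ˣ g < ∫₀ᵇ g = a/2`. Positivity of `1 + h` then turns the equation into the
formula for `c`, and `c ≥ 0` gives `h' ≥ -2/a`.
-/

open MeasureTheory intervalIntegral Set

section Primitive

variable {E : Type*} [NormedAddCommGroup E] [NormedSpace ℝ E] {f : ℝ → E} {s t : ℝ}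

theorem continuousOn_primitive_of_continuousOn (hst : s ≤ t) (hf : ContinuousOn f (Icc s t)) :
    ContinuousOn (fun x => ∫ y in s..x, f y) (Icc s t) := by
  rw [← uIcc_of_le hst] at hf ⊢
  exact continuousOn_primitive_interval hf.integrableOn_uIcc

theorem hasDerivAt_primitive_of_continuousOn [CompleteSpace E] (hf : ContinuousOn f (Icc s t))
    {x : ℝ} (hx : x ∈ Ioo s t) : HasDerivAt (fun u => ∫ y in s..u, f y) (f x) x := by
  have hfx : ContinuousOn f (Icc s x) := hf.mono (Icc_subset_Icc le_rfl hx.2.le)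
  exact integral_hasDerivAt_right (hfx.intervalIntegrable_of_Icc hx.1.le)
    ((hf.mono Ioo_subset_Icc_self).stronglyMeasurableAtFilter isOpen_Ioo x hx)
    ((hf x (Ioo_subset_Icc_self hx)).continuousAt (Icc_mem_nhds hx.1 hx.2))

end Primitive

section IntegratingFactor

variable {p : ℝ → ℝ} {s t : ℝ}

theorem continuousOn_exp_mul_primitive (k : ℝ) (hst : s ≤ t) (hp : ContinuousOn p (Icc s t)) :
    ContinuousOn (fun x => Real.exp (k * ∫ y in s..x, p y)) (Icc s t) :=
  Real.continuous_exp.comp_continuousOn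
    (continuousOn_const.mul (continuousOn_primitive_of_continuousOn hst hp))

theorem hasDerivAt_exp_mul_primitive (k : ℝ) (hp : ContinuousOn p (Icc s t)) {x : ℝ}
    (hx : x ∈ Ioo s t) :
    HasDerivAt (fun x => Real.exp (k * ∫ y in s..x, p y))
      (k * p x * Real.exp (k * ∫ y in s..x, p y)) x :=
  (((hasDerivAt_primitive_of_continuousOn hp hx).const_mul k).exp).congr_deriv (by ring)

theorem mul_integratingFactor_eq_add_integral {u E q : ℝ → ℝ} (hst : s ≤ t)
    (hu : ContinuousOn u (Icc s t)) (hE : ContinuousOn E (Icc s t))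
    (hq : ContinuousOn q (Icc s t))
    (hu' : ∀ x ∈ Ioo s t, HasDerivAt u (p x * u x + q x) x)
    (hE' : ∀ x ∈ Ioo s t, HasDerivAt E (-(p x * E x)) x) :
    u t * E t = u s * E s + ∫ y in s..t, q y * E y := by
  have hderiv : ∀ x ∈ Ioo s t, HasDerivAt (fun y => u y * E y) (q x * E x) x := fun x hx =>
    ((hu' x hx).mul (hE' x hx)).congr_deriv (by ring)
  have := integral_eq_sub_of_hasDerivAt_of_le hst (hu.mul hE) hderiv
    ((hq.mul hE).intervalIntegrable_of_Icc hst)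
  simp only [Pi.mul_apply] at this
  linarith

end IntegratingFactor

theorem intervalIntegral_lt_intervalIntegral_of_pos {g : ℝ → ℝ} {s x t : ℝ}
    (hg : ContinuousOn g (Icc s t)) (hpos : ∀ y ∈ Ioo x t, 0 < g y) (hsx : s ≤ x) (hxt : x < t) :
    ∫ y in s..x, g y < ∫ y in s..t, g y := by
  rw [← integral_add_adjacent_intervals
    ((hg.mono (Icc_subset_Icc le_rfl hxt.le)).intervalIntegrable_of_Icc hsx)
    ((hg.mono (Icc_subset_Icc hsx le_rfl)).intervalIntegrable_of_Icc hxt.le)]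
  have := intervalIntegral_pos_of_pos_on
    ((hg.mono (Icc_subset_Icc hsx le_rfl)).intervalIntegrable_of_Icc hxt.le) hpos hxt
  linarith

theorem one_add_mul_eq_one_sub_integral {c g h h' : ℝ → ℝ} {b k x : ℝ}
    (hc : ContinuousOn c (Icc 0 b)) (hg : ∀ x, g x = Real.exp (-2 * ∫ y in (0:ℝ)..x, c y))
    (hderiv : ∀ x ∈ Icc 0 b, HasDerivAt h (h' x) x) (h0 : h 0 = 0)
    (hode : ∀ x ∈ Ioo 0 b, h' x = 2 * c x * (1 + h x) - k) (hx : x ∈ Icc 0 b) :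
    (1 + h x) * g x = 1 - k * ∫ y in (0:ℝ)..x, g y := by
  have hg_eq : g = fun x => Real.exp (-2 * ∫ y in (0:ℝ)..x, c y) := funext hg
  have hx_sub : Icc 0 x ⊆ Icc 0 b := Icc_subset_Icc le_rfl hx.2
  have hIoo_sub : Ioo 0 x ⊆ Ioo 0 b := Ioo_subset_Ioo le_rfl hx.2
  have hg_cont : ContinuousOn g (Icc 0 x) :=
    hg_eq ▸ continuousOn_exp_mul_primitive _ hx.1 (hc.mono hx_sub)
  have hg_deriv : ∀ y ∈ Ioo 0 x, HasDerivAt g (-(2 * c y * g y)) y := fun y hy => by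
    rw [hg_eq]
    exact (hasDerivAt_exp_mul_primitive (-2) hc (hIoo_sub hy)).congr_deriv (by ring)
  have := mul_integratingFactor_eq_add_integral (p := fun y => 2 * c y) (q := fun _ => -k)
    (u := fun y => 1 + h y) hx.1
    (continuousOn_const.add fun y hy => (hderiv y (hx_sub hy)).continuousAt.continuousWithinAt)
    hg_cont continuousOn_const
    (fun y hy => ((hderiv y (hx_sub (Ioo_subset_Icc_self hy))).const_add 1).congr_deriv
      (by rw [hode y (hIoo_sub hy)]; ring))
    hg_deriv
  simp only [h0, hg 0, integral_same, mul_zero, Real.exp_zero,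
    intervalIntegral.integral_const_mul] at this
  linarith

theorem stmt_9_general (b a : ℝ) (c g h h' : ℝ → ℝ)
    (hc_cont : ContinuousOn c (Set.Icc 0 b))
    (hc_nonneg : ∀ x ∈ Set.Icc (0:ℝ) b, 0 ≤ c x)
    (hg : ∀ x, g x = Real.exp (-2 * ∫ y in (0:ℝ)..x, c y))
    (ha : a = 2 * ∫ x in (0:ℝ)..b, g x)
    (hderiv : ∀ x ∈ Set.Icc (0:ℝ) b, HasDerivAt h (h' x) x)
    (h0 : h 0 = 0)
    (hode : ∀ x ∈ Set.Ioo (0:ℝ) b, -(c x) * h x + (1/2) * h' x = c x - 1/a) :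
    ∀ x ∈ Set.Ioo (0:ℝ) b,
      -1 < h x ∧ -(2/a) ≤ h' x ∧ c x = (h' x + 2/a) / (2 * (1 + h x)) := by
  intro x hx
  have hg_pos : ∀ y, 0 < g y := fun y => (hg y).symm ▸ Real.exp_pos _
  have hg_cont : ContinuousOn g (Icc 0 b) := funext hg ▸
    continuousOn_exp_mul_primitive _ (hx.1.trans hx.2).le hc_cont
  have hode' : ∀ y ∈ Ioo 0 b, h' y = 2 * c y * (1 + h y) - 2 / a := fun y hy => by
    linear_combination 2 * hode y hy
  have hconserve := one_add_mul_eq_one_sub_integral hc_cont hg hderiv h0 hode'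
    (Ioo_subset_Icc_self hx)
  have hhead : 0 < ∫ y in (0:ℝ)..x, g y := intervalIntegral_pos_of_pos_on
    ((hg_cont.mono (Icc_subset_Icc le_rfl hx.2.le)).intervalIntegrable_of_Icc hx.1.le)
    (fun y _ => hg_pos y) hx.1
  have hlt : ∫ y in (0:ℝ)..x, g y < a / 2 := by
    have := intervalIntegral_lt_intervalIntegral_of_pos hg_cont (fun y _ => hg_pos y) hx.1.le hx.2
    linarith
  have ha_pos : 0 < a := by linarith
  have hu_pos : 0 < 1 + h x := by
    have : 0 < 1 - 2 / a * ∫ y in (0:ℝ)..x, g y := by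
      rw [sub_pos, div_mul_eq_mul_div, div_lt_one ha_pos]
      linarith
    exact pos_of_mul_pos_left (hconserve ▸ this) (hg_pos x).le
  have hh'x := hode' x hx
  refine ⟨by linarith, by nlinarith [hc_nonneg x (Ioo_subset_Icc_self hx)], ?_⟩
  rw [hh'x]
  field_simp
  ring

theorem stmt_9 (b a : ℝ) (c g h h' : ℝ → ℝ) (hb : 0 < b)
    (hc_cont : ContinuousOn c (Set.Icc 0 b))
    (hc_nonneg : ∀ x ∈ Set.Icc (0:ℝ) b, 0 ≤ c x)
    (hg : ∀ x, g x = Real.exp (-2 * ∫ y in (0:ℝ)..x, c y))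
    (ha : a = 2 * ∫ x in (0:ℝ)..b, g x)
    (hderiv : ∀ x ∈ Set.Icc (0:ℝ) b, HasDerivAt h (h' x) x)
    (hh'cont : ContinuousOn h' (Set.Icc 0 b))
    (h0 : h 0 = 0) (hhb : h b = -1)
    (hode : ∀ x ∈ Set.Ioo (0:ℝ) b, -(c x) * h x + (1/2) * h' x = c x - 1/a) :
    ∀ x ∈ Set.Ioo (0:ℝ) b,
      -1 < h x ∧ -(2/a) ≤ h' x ∧ c x = (h' x + 2/a) / (2 * (1 + h x)) :=
  stmt_9_general b a c g h h' hc_cont hc_nonneg hg ha hderiv h0 hode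
end

section
/- Let γ > 0 and a with 1 < a/γ < 2. The system (a/2)u₀ = r(1−u₀)^{a/2γ−1} − γ, a/2 = r(1 − a/2γ)(1−u₀)^{a/2γ−2} in unknowns (u₀, r) has the unique solution u₀ = 4γ(a−γ)/(a(4γ−a)), r = (aγ/(2γ−a))(1−u₀)^{2−a/2γ}, and this solution satisfies 0 < u₀ < 1 and r > 0, with 1 − u₀ = (4γ²−a²)/(a(4γ−a)). -/
/-!
Write `x = 1 - u` and `β = a / (2γ)`. For `x > 0` the second equation says exactly
`r = (a/2) / (1 - β) * x ^ (2 - β)`, and then `r * x ^ (β - 1) = (a/2) / (1 - β) * x`, so the first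
equation becomes linear in `x`. Hence the system has exactly one solution with `u < 1`.
-/

namespace Real

theorem eq_mul_mul_rpow_sub_two_iff {c r β x : ℝ} (hx : 0 < x) (hβ : β ≠ 1) :
    c = r * (1 - β) * x ^ (β - 2) ↔ r = c / (1 - β) * x ^ (2 - β) := by
  have hβ' : 1 - β ≠ 0 := sub_ne_zero.mpr hβ.symm
  have hinv : x ^ (β - 2) = (x ^ (2 - β))⁻¹ := by rw [← rpow_neg hx.le, neg_sub]
  have hpos : 0 < x ^ (2 - β) := rpow_pos_of_pos hx _
  rw [hinv]
  field_simp
  constructor <;> intro h <;> linarith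

theorem mul_rpow_sub_one_of_eq_mul_rpow_two_sub {k r β x : ℝ} (hx : 0 < x)
    (hr : r = k * x ^ (2 - β)) : r * x ^ (β - 1) = k * x := by
  rw [hr, mul_assoc, ← rpow_add hx, show 2 - β + (β - 1) = 1 by ring, rpow_one]

end Real

open Real

theorem mul_one_sub_eq_div_mul_sub_iff {c γ β x : ℝ} (hβ : β ≠ 1) (hc : c * (2 - β) ≠ 0) :
    c * (1 - x) = c / (1 - β) * x - γ ↔ x = (c + γ) * (1 - β) / (c * (2 - β)) := by
  have hβ' : 1 - β ≠ 0 := sub_ne_zero.mpr hβ.symm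
  rw [eq_div_iff hc, eq_sub_iff_add_eq, div_mul_eq_mul_div, eq_div_iff hβ']
  constructor <;> intro h <;> linarith

/-- The system with `a / 2` and `a / (2γ)` turned into free parameters `c` and `β`. -/
def SolvesPowerSystem (c γ β u r : ℝ) : Prop :=
  c * u = r * (1 - u) ^ (β - 1) - γ ∧ c = r * (1 - β) * (1 - u) ^ (β - 2)

theorem solvesPowerSystem_iff {c γ β u r : ℝ} (hu : u < 1) (hβ : β ≠ 1) (hc : c * (2 - β) ≠ 0) :
    SolvesPowerSystem c γ β u r ↔
      1 - u = (c + γ) * (1 - β) / (c * (2 - β)) ∧ r = c / (1 - β) * (1 - u) ^ (2 - β) := by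
  have hx : 0 < 1 - u := sub_pos.mpr hu
  rw [SolvesPowerSystem, eq_mul_mul_rpow_sub_two_iff hx hβ,
    ← mul_one_sub_eq_div_mul_sub_iff hβ hc, sub_sub_cancel]
  constructor
  · rintro ⟨hlin, hr⟩
    exact ⟨by rwa [mul_rpow_sub_one_of_eq_mul_rpow_two_sub hx hr] at hlin, hr⟩
  · rintro ⟨hlin, hr⟩
    exact ⟨by rwa [mul_rpow_sub_one_of_eq_mul_rpow_two_sub hx hr], hr⟩

theorem stmt_13 (a γ u₀ r : ℝ) (hγ : 0 < γ) (h1 : γ < a) (h2 : a < 2 * γ)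
    (hu₀ : u₀ = 4 * γ * (a - γ) / (a * (4 * γ - a)))
    (hr : r = (a * γ / (2 * γ - a)) * (1 - u₀) ^ (2 - a / (2 * γ))) :
    ((a/2) * u₀ = r * (1 - u₀) ^ (a / (2 * γ) - 1) - γ)
    ∧ (a/2 = r * (1 - a / (2 * γ)) * (1 - u₀) ^ (a / (2 * γ) - 2))
    ∧ 0 < u₀ ∧ u₀ < 1 ∧ 0 < r
    ∧ 1 - u₀ = (4 * γ^2 - a^2) / (a * (4 * γ - a))
    ∧ ∀ u' r' : ℝ, u' ∈ Set.Ioo (0 : ℝ) 1 → 0 < r' →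
        ((a/2) * u' = r' * (1 - u') ^ (a / (2 * γ) - 1) - γ) →
        (a/2 = r' * (1 - a / (2 * γ)) * (1 - u') ^ (a / (2 * γ) - 2)) →
        u' = u₀ ∧ r' = r := by
  have ha : 0 < a := hγ.trans h1
  have h2γa : 2 * γ - a ≠ 0 := by linarith
  have h4γa : 4 * γ - a ≠ 0 := by linarith
  have hden : 0 < a * (4 * γ - a) := mul_pos ha (by linarith)
  have hβ : a / (2 * γ) ≠ 1 := by rw [Ne, div_eq_one_iff_eq (by positivity)]; linarith
  have hc_eq : a / 2 * (2 - a / (2 * γ)) = a * (4 * γ - a) / (4 * γ) := by field_simp; ring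
  have hc : a / 2 * (2 - a / (2 * γ)) ≠ 0 := by rw [hc_eq]; positivity
  have hcoef : a / 2 / (1 - a / (2 * γ)) = a * γ / (2 * γ - a) := by field_simp
  have h1u : 1 - u₀ = (4 * γ ^ 2 - a ^ 2) / (a * (4 * γ - a)) := by rw [hu₀]; field_simp; ring
  have hroot : (a / 2 + γ) * (1 - a / (2 * γ)) / (a / 2 * (2 - a / (2 * γ))) = 1 - u₀ := by
    rw [h1u, hc_eq]; field_simp; ring
  have hx₀ : 0 < 1 - u₀ := by rw [h1u]; exact div_pos (by nlinarith) hden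
  have hu₀pos : 0 < u₀ := by rw [hu₀]; exact div_pos (by nlinarith) hden
  have hrpos : 0 < r := by
    rw [hr]; exact mul_pos (div_pos (by positivity) (by linarith)) (rpow_pos_of_pos hx₀ _)
  have hsol : SolvesPowerSystem (a / 2) γ (a / (2 * γ)) u₀ r :=
    (solvesPowerSystem_iff (by linarith) hβ hc).mpr ⟨hroot.symm, by rw [hcoef, hr]⟩
  refine ⟨hsol.1, hsol.2, hu₀pos, by linarith, hrpos, h1u, ?_⟩
  rintro u' r' ⟨-, hu'⟩ - heq₁ heq₂
  obtain ⟨hx', hr'⟩ := (solvesPowerSystem_iff hu' hβ hc).mp ⟨heq₁, heq₂⟩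
  obtain rfl : u' = u₀ := by linarith
  exact ⟨rfl, by rw [hr', hr, hcoef]⟩
end

section
/- Let γ > 0, −2 < a/γ < 1, a > 0, and p = a/(2γ), so −1 < p < 1/2. Define for ε ∈ (0,1): u_{ε,0} = 1−ε, y_{ε,0} = γ(1−u_{ε,0})^{−p} − γ, y'_{ε,0} = (a/2)(1−u_{ε,0})^{−p−1}. Then with η(v,w,z,β) = ∫_v^1 (w + z(u−v) + γ + β(u−1)z)² du and β = 2γ/a, one has η(u_{ε,0}, y_{ε,0}, y'_{ε,0}, 2γ/a) = O(ε^{1−a/γ}) as ε → 0; in particular it tends to 0 since 1 − a/γ > 0. -/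
open Filter Asymptotics

noncomputable def etaInt (γ : ℝ) (v w z β : ℝ) : ℝ :=
  ∫ u in v..1, (w + z * (u - v) + γ + β * (u - 1) * z)^2

lemma etaInt_key (a γ : ℝ) (hγ : 0 < γ) (ha : 0 < a) {ε : ℝ} (hε : 0 < ε) :
    etaInt γ (1 - ε) (γ * ε ^ (-(a / (2 * γ))) - γ)
        ((a/2) * ε ^ (-(a / (2 * γ)) - 1)) (2 * γ / a)
    = (a/2 + γ)^2 / 3 * ε ^ (1 - a / γ) := by
  set p := a / (2 * γ) with hp
  have hεne : ε ≠ 0 := hε.ne'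
  have hane : a ≠ 0 := ha.ne'
  have hγne : γ ≠ 0 := hγ.ne'
  have h1 : ε ^ (-p) = ε ^ (-p - 1) * ε := by
    rw [← Real.rpow_add_one hεne]; ring_nf
  have integrand : ∀ u : ℝ,
      ((γ * ε ^ (-p) - γ) + (a/2) * ε ^ (-p - 1) * (u - (1 - ε)) + γ
        + (2*γ/a) * (u - 1) * ((a/2) * ε ^ (-p-1)))^2
      = ((a/2 + γ) * ε ^ (-p-1))^2 * (u - (1 - ε))^2 := by
    intro u
    rw [h1]
    field_simp
    ring
  unfold etaInt
  simp_rw [integrand]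
  rw [intervalIntegral.integral_const_mul]
  have hcomp : (∫ u in (1-ε)..1, (u - (1 - ε))^2) = ε^3 / 3 := by
    have := intervalIntegral.integral_comp_sub_right (a := 1-ε) (b := 1)
      (fun x : ℝ => x ^ 2) (1 - ε)
    simp only [sub_self, show (1:ℝ) - (1 - ε) = ε by ring] at this
    rw [this, integral_pow]
    norm_num
  rw [hcomp]
  have h3 : (ε ^ (-p-1))^2 * ε^3 = ε ^ (1 - a/γ) := by
    have hc : ((-p-1) : ℝ) + (-p-1) + 3 = 1 - a/γ := by
      rw [hp]; field_simp; ring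
    have h3' : (ε:ℝ)^3 = ε ^ ((3:ℕ):ℝ) := (Real.rpow_natCast ε 3).symm
    rw [sq, ← Real.rpow_add hε, h3', ← Real.rpow_add hε]
    norm_num
    rw [show (-p-1) + (-p-1) + 3 = 1 - a/γ from hc]
  rw [mul_pow, mul_assoc]
  linear_combination ((a/2 + γ)^2/3) * h3

theorem stmt_17 (a γ : ℝ) (hγ : 0 < γ) (ha : 0 < a)
    (h1 : a / γ < 1) (h2 : -2 < a / γ) :
    (fun ε : ℝ => etaInt γ (1 - ε) (γ * ε ^ (-(a / (2 * γ))) - γ)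
        ((a/2) * ε ^ (-(a / (2 * γ)) - 1)) (2 * γ / a))
      =O[nhdsWithin 0 (Set.Ioi 0)] (fun ε : ℝ => ε ^ (1 - a / γ))
    ∧ Tendsto (fun ε : ℝ => etaInt γ (1 - ε) (γ * ε ^ (-(a / (2 * γ))) - γ)
        ((a/2) * ε ^ (-(a / (2 * γ)) - 1)) (2 * γ / a))
        (nhdsWithin 0 (Set.Ioi 0)) (nhds 0) := by
  have heq : (fun ε : ℝ => etaInt γ (1 - ε) (γ * ε ^ (-(a / (2 * γ))) - γ)
        ((a/2) * ε ^ (-(a / (2 * γ)) - 1)) (2 * γ / a))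
      =ᶠ[nhdsWithin 0 (Set.Ioi 0)]
      (fun ε : ℝ => (a/2 + γ)^2 / 3 * ε ^ (1 - a / γ)) := by
    filter_upwards [self_mem_nhdsWithin] with ε hε
    exact etaInt_key a γ hγ ha hε
  have h0 : (0:ℝ) < 1 - a/γ := by linarith
  constructor
  · exact heq.trans_isBigO ((isBigO_refl (fun ε : ℝ => ε ^ (1 - a/γ)) _).const_mul_left _)
  · have hrt : Tendsto (fun ε : ℝ => ε ^ (1 - a/γ)) (nhds 0) (nhds 0) := by
      have := (Real.continuousAt_rpow_const 0 (1 - a/γ) (Or.inr h0.le)).tendsto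
      rwa [Real.zero_rpow h0.ne'] at this
    have t2 : Tendsto (fun ε : ℝ => (a/2 + γ)^2 / 3 * ε ^ (1 - a/γ))
        (nhdsWithin 0 (Set.Ioi 0)) (nhds 0) := by
      have ht : Tendsto (fun ε : ℝ => ε ^ (1 - a/γ))
          (nhdsWithin 0 (Set.Ioi 0)) (nhds 0) := hrt.mono_left nhdsWithin_le_nhds
      simpa using ht.const_mul ((a/2 + γ)^2 / 3)
    exact t2.congr' heq.symm
end
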